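/- If 0 < L₁ < L₂ and, for i = 1, 2, cᵢ denotes the unique real solution of h(c − Lᵢ) = h(c) − Lᵢ·h′(c), then h(c₁ − L₁) − h(c₁) < h(c₂ − L₂) − h(c₂); that is, the function G(L) = h(c(L) − L) − h(c(L)) is strictly increasing on (0, ∞). -/

import Mathlib

/-- The hill function `h(x) = arccos(tanh x)`. -/
noncomputable def hill (x : ℝ) : ℝ := Real.arccos (Real.tanh x)

/-- The derivative of the hill function: `h'(x) = -1/cosh x`. -/
noncomputable def hill' (x : ℝ) : ℝ := -1 / Real.cosh x

/-!
Write `T_c = hillTangent c` for the tangent line of `h` at `c`, so that the tangency condition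
says that `T_c` meets the graph of `h` again at `c - L`. Since `h' = -sech` is even and increases with `|x|`,
the mean value theorem shows that the chord over `[c - L, c]` has slope `h'(-c)`, whence
`0 < c` and `c - L < -c`; moreover `h < T_c` to the left of `c - L`, while `h` is strictly convex
on `[0, ∞)`. Comparing the tangent lines at `c₁` and `c₂` through these facts gives
`c₁ < c₂` and `c₂ - L₂ < c₁ - L₁`, so `[c₁ - L₁, c₁] ⊂ [c₂ - L₂, c₂]` and `G(L₁) < G(L₂)` because
`h` is decreasing.
-/

open Real Set

lemma hasDerivAt_tanh (x : ℝ) : HasDerivAt tanh (cosh x ^ 2)⁻¹ x := by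
  have h := (hasDerivAt_sinh x).div (hasDerivAt_cosh x) (cosh_pos x).ne'
  rw [← sq, ← sq, cosh_sq_sub_sinh_sq, one_div] at h
  exact h.congr_of_eventuallyEq (.of_forall tanh_eq_sinh_div_cosh)

lemma one_sub_tanh_sq (x : ℝ) : 1 - tanh x ^ 2 = (cosh x ^ 2)⁻¹ := by
  rw [tanh_eq_sinh_div_cosh, div_pow, cosh_sq]
  field_simp
  ring

lemma hill_hasDerivAt (x : ℝ) : HasDerivAt hill (hill' x) x := by
  have h := (hasDerivAt_arccos (neg_one_lt_tanh x).ne' (tanh_lt_one x).ne).comp x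
    (hasDerivAt_tanh x)
  rw [one_sub_tanh_sq, sqrt_inv, sqrt_sq (cosh_pos x).le] at h
  refine h.congr_deriv ?_
  rw [hill']
  field_simp

lemma hill_strictAnti : StrictAnti hill :=
  strictAnti_of_deriv_neg fun x => by
    rw [(hill_hasDerivAt x).deriv, hill', neg_div]
    exact neg_neg_of_pos (one_div_pos.2 (cosh_pos x))

lemma hill'_lt_hill'_iff {a b : ℝ} : hill' a < hill' b ↔ |a| < |b| := by
  rw [hill', hill', neg_div, neg_div, neg_lt_neg_iff, one_div, one_div,
    inv_lt_inv₀ (cosh_pos b) (cosh_pos a), cosh_lt_cosh]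

lemma hill'_le_hill'_iff {a b : ℝ} : hill' a ≤ hill' b ↔ |a| ≤ |b| := by
  simpa only [not_lt] using hill'_lt_hill'_iff.not

lemma hill'_eq_hill'_iff {a b : ℝ} : hill' a = hill' b ↔ |a| = |b| := by
  rw [le_antisymm_iff, le_antisymm_iff, hill'_le_hill'_iff, hill'_le_hill'_iff]

lemma exists_hill_sub_eq {a b : ℝ} (hab : a < b) :
    ∃ ξ ∈ Ioo a b, hill b - hill a = hill' ξ * (b - a) := by
  obtain ⟨ξ, hξ, h⟩ := exists_hasDerivAt_eq_slope hill hill' hab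
    (fun x _ => (hill_hasDerivAt x).continuousAt.continuousWithinAt)
    (fun x _ => hill_hasDerivAt x)
  exact ⟨ξ, hξ, by rw [h, div_mul_cancel₀ _ (sub_ne_zero.2 hab.ne')]⟩

lemma mul_sub_lt_hill_sub {a b s : ℝ} (hab : a < b) (h : ∀ ξ ∈ Ioo a b, s < hill' ξ) :
    s * (b - a) < hill b - hill a := by
  obtain ⟨ξ, hξ, h_eq⟩ := exists_hill_sub_eq hab
  exact h_eq ▸ mul_lt_mul_of_pos_right (h ξ hξ) (sub_pos.2 hab)

lemma hill_sub_lt_mul_sub {a b s : ℝ} (hab : a < b) (h : ∀ ξ ∈ Ioo a b, hill' ξ < s) :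
    hill b - hill a < s * (b - a) := by
  obtain ⟨ξ, hξ, h_eq⟩ := exists_hill_sub_eq hab
  exact h_eq ▸ mul_lt_mul_of_pos_right (h ξ hξ) (sub_pos.2 hab)

noncomputable def hillTangent (c x : ℝ) : ℝ := hill c + hill' c * (x - c)

lemma hillTangent_lt_hill {c x : ℝ} (hc : 0 ≤ c) (hx : 0 ≤ x) (hxc : x ≠ c) :
    hillTangent c x < hill x := by
  rw [hillTangent]
  rcases hxc.lt_or_gt with hlt | hgt
  · have := hill_sub_lt_mul_sub hlt fun ξ hξ => hill'_lt_hill'_iff.2 <| by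
      rw [abs_of_nonneg (hx.trans hξ.1.le), abs_of_nonneg hc]; exact hξ.2
    linarith
  · have := mul_sub_lt_hill_sub hgt fun ξ hξ => hill'_lt_hill'_iff.2 <| by
      rw [abs_of_nonneg hc, abs_of_nonneg (hc.trans hξ.1.le)]; exact hξ.1
    linarith

lemma hillTangent_le_hill {c x : ℝ} (hc : 0 ≤ c) (hx : 0 ≤ x) : hillTangent c x ≤ hill x := by
  rcases eq_or_ne x c with rfl | hxc
  · simp [hillTangent]
  · exact (hillTangent_lt_hill hc hx hxc).le

lemma hillTangent_lt_hillTangent {a b x : ℝ} (ha : 0 ≤ a) (hab : a < b) (hx : x ≤ a) :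
    hillTangent b x < hillTangent a x := by
  have h_tangent : hillTangent b a < hill a := hillTangent_lt_hill (ha.trans hab.le) ha hab.ne
  have h_slope : hill' a ≤ hill' b := hill'_le_hill'_iff.2 <| by
    rw [abs_of_nonneg ha, abs_of_nonneg (ha.trans hab.le)]; exact hab.le
  have := mul_nonneg_of_nonpos_of_nonpos (sub_nonpos.2 h_slope) (sub_nonpos.2 hx)
  unfold hillTangent at *
  linarith

lemma hillTangent_le_hillTangent {a b x : ℝ} (ha : 0 ≤ a) (hab : a ≤ b) (hx : x ≤ a) :
    hillTangent b x ≤ hillTangent a x := by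
  rcases hab.eq_or_lt with rfl | hlt
  · exact le_rfl
  · exact (hillTangent_lt_hillTangent ha hlt hx).le

def IsTangencyPoint (L c : ℝ) : Prop := hill (c - L) = hill c - L * hill' c

namespace IsTangencyPoint

variable {L c x : ℝ}

lemma hillTangent_eq (hc : IsTangencyPoint L c) : hillTangent c (c - L) = hill (c - L) := by
  rw [hc, hillTangent]
  ring

lemma pos_and_sub_lt_neg (hL : 0 < L) (hc : IsTangencyPoint L c) : 0 < c ∧ c - L < -c := by
  obtain ⟨ξ, ⟨hξ_left, hξ_right⟩, h_chord⟩ := exists_hill_sub_eq (sub_lt_self c hL)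
  have h_slope : hill' ξ = hill' c := by
    rw [hc, sub_sub_cancel] at h_chord
    exact mul_right_cancel₀ hL.ne' (by linarith)
  have hξ : ξ = -c := (abs_eq_abs.1 (hill'_eq_hill'_iff.1 h_slope)).resolve_left hξ_right.ne
  constructor <;> linarith

lemma hill_lt_hillTangent (hL : 0 < L) (hc : IsTangencyPoint L c) (hx : x < c - L) :
    hill x < hillTangent c x := by
  obtain ⟨hc_pos, hcL⟩ := hc.pos_and_sub_lt_neg hL
  have := mul_sub_lt_hill_sub hx fun ξ hξ => hill'_lt_hill'_iff.2 <| by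
    rw [abs_of_pos hc_pos]; exact lt_abs.2 (Or.inr (by linarith [hξ.2]))
  rw [← hc.hillTangent_eq] at this
  unfold hillTangent at *
  linarith

lemma sub_le_of_hillTangent_le (hL : 0 < L) (hc : IsTangencyPoint L c)
    (h : hillTangent c x ≤ hill x) : c - L ≤ x :=
  not_lt.1 fun hx => (h.trans_lt (hc.hill_lt_hillTangent hL hx)).false

lemma sub_lt_of_hillTangent_lt (hL : 0 < L) (hc : IsTangencyPoint L c)
    (h : hillTangent c x < hill x) : c - L < x := by
  refine (hc.sub_le_of_hillTangent_le hL h.le).lt_of_ne ?_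
  rintro rfl
  exact h.ne hc.hillTangent_eq

end IsTangencyPoint

/-- If `0 < L₁ < L₂` and `cᵢ` solves `h (c - Lᵢ) = h c - Lᵢ * h' c`, then
`h (c₁ - L₁) - h c₁ < h (c₂ - L₂) - h c₂`: the function
`G(L) = h (c(L) - L) - h (c(L))` is strictly increasing on `(0, ∞)`. -/
theorem hill_G_strictMono {L₁ L₂ c₁ c₂ : ℝ}
    (hL₁ : 0 < L₁) (hL₁₂ : L₁ < L₂)
    (hc₁ : hill (c₁ - L₁) = hill c₁ - L₁ * hill' c₁)
    (hc₂ : hill (c₂ - L₂) = hill c₂ - L₂ * hill' c₂) :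
    hill (c₁ - L₁) - hill c₁ < hill (c₂ - L₂) - hill c₂ := by
  replace hc₁ : IsTangencyPoint L₁ c₁ := hc₁
  replace hc₂ : IsTangencyPoint L₂ c₂ := hc₂
  have hL₂ : 0 < L₂ := hL₁.trans hL₁₂
  have hc₁_pos := (hc₁.pos_and_sub_lt_neg hL₁).1
  have hc₂_pos := (hc₂.pos_and_sub_lt_neg hL₂).1
  have hc : c₁ < c₂ := by
    by_contra! h
    have := hc₁.sub_le_of_hillTangent_le hL₁ <|
      (hillTangent_le_hillTangent hc₂_pos.le h (sub_le_self c₂ hL₂.le)).trans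
        hc₂.hillTangent_eq.le
    linarith
  have h_left : c₂ - L₂ < c₁ - L₁ := hc₂.sub_lt_of_hillTangent_lt hL₂ <|
    (hillTangent_lt_hillTangent hc₁_pos.le hc (sub_le_self c₁ hL₁.le)).trans_eq
      hc₁.hillTangent_eq
  linarith [hill_strictAnti h_left, hill_strictAnti hc]
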